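/- Kähler anticommutation in Theorem 3.12. In the Clifford model, assume the derivations pairwise commute (∂_j∘∂_r = ∂_r∘∂_j for all j, r). Define d† := (1/2) Σ_{ℓ=1}^{2k} (∂_ℓ⊗1⊗γ_ℓ − iε′ ∂_ℓ⊗γ_ℓ⊗σ), d₂ := (1/2) Σ_{ℓ=1, ℓ odd}^{2k−1} (∂_ℓ⊗1⊗γ_{ℓ+1} − ∂_{ℓ+1}⊗1⊗γ_ℓ + iε′(∂_ℓ⊗γ_{ℓ+1}⊗σ − ∂_{ℓ+1}⊗γ_ℓ⊗σ)), and d₂† := (1/2) Σ_{ℓ=1, ℓ odd}^{2k−1} (∂_ℓ⊗1⊗γ_{ℓ+1} − ∂_{ℓ+1}⊗1⊗γ_ℓ − iε′(∂_ℓ⊗γ_{ℓ+1}⊗σ − ∂_{ℓ+1}⊗γ_ℓ⊗σ)). Then d†∘d₂ + d₂∘d† = 0 and d∘d₂† + d₂†∘d = 0. -/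
import Mathlib


open scoped TensorProduct

/-- Shortcut instance to help instance search on the nested tensor product. -/
noncomputable instance tensorAddCommGroup {A : Type*} [Ring A] [Algebra ℂ A] {N : ℕ} :
    AddCommGroup (A ⊗[ℂ] ((Fin N → ℂ) ⊗[ℂ] (Fin N → ℂ))) :=
  TensorProduct.addCommGroup

/-- The operator `∂ ⊗ M ⊗ M′` on `A ⊗ ℂ^N ⊗ ℂ^N` induced by a ℂ-linear map
`∂ : A → A` and `N × N` complex matrices `M`, `M′`. -/
noncomputable def cliffOp {A : Type*} [Ring A] [Algebra ℂ A] {N : ℕ}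
    (p : A →ₗ[ℂ] A) (M M' : Matrix (Fin N) (Fin N) ℂ) :
    A ⊗[ℂ] ((Fin N → ℂ) ⊗[ℂ] (Fin N → ℂ)) →ₗ[ℂ]
      A ⊗[ℂ] ((Fin N → ℂ) ⊗[ℂ] (Fin N → ℂ)) :=
  TensorProduct.map p (TensorProduct.map M.mulVecLin M'.mulVecLin)

section Helpers

variable {A : Type*} [Ring A] [Algebra ℂ A] {N : ℕ}

lemma mulVecLin_smul (c : ℂ) (M : Matrix (Fin N) (Fin N) ℂ) :
    (c • M).mulVecLin = c • M.mulVecLin := by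
  ext v
  simp [Matrix.mulVecLin_apply, Matrix.smul_mulVec]

lemma cliffOp_mul (p q : A →ₗ[ℂ] A) (M M' P P' : Matrix (Fin N) (Fin N) ℂ) :
    cliffOp p M M' * cliffOp q P P' = cliffOp (p ∘ₗ q) (M * P) (M' * P') := by
  show cliffOp p M M' ∘ₗ cliffOp q P P' = _
  unfold cliffOp
  rw [Matrix.mulVecLin_mul, Matrix.mulVecLin_mul, ← TensorProduct.map_comp,
    ← TensorProduct.map_comp]

lemma cliffOp_add_mid (p : A →ₗ[ℂ] A) (M P M' : Matrix (Fin N) (Fin N) ℂ) :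
    cliffOp p (M + P) M' = cliffOp p M M' + cliffOp p P M' := by
  unfold cliffOp
  rw [Matrix.mulVecLin_add, TensorProduct.map_add_left, TensorProduct.map_add_right]

lemma cliffOp_add_right (p : A →ₗ[ℂ] A) (M M' P' : Matrix (Fin N) (Fin N) ℂ) :
    cliffOp p M (M' + P') = cliffOp p M M' + cliffOp p M P' := by
  unfold cliffOp
  rw [Matrix.mulVecLin_add, TensorProduct.map_add_right, TensorProduct.map_add_right]

lemma cliffOp_smul_mid (p : A →ₗ[ℂ] A) (c : ℂ) (M M' : Matrix (Fin N) (Fin N) ℂ) :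
    cliffOp p (c • M) M' = c • cliffOp p M M' := by
  unfold cliffOp
  rw [mulVecLin_smul, TensorProduct.map_smul_left, TensorProduct.map_smul_right]

lemma cliffOp_smul_right (p : A →ₗ[ℂ] A) (c : ℂ) (M M' : Matrix (Fin N) (Fin N) ℂ) :
    cliffOp p M (c • M') = c • cliffOp p M M' := by
  unfold cliffOp
  rw [mulVecLin_smul, TensorProduct.map_smul_right, TensorProduct.map_smul_right]

lemma cliffOp_zero_right (p : A →ₗ[ℂ] A) (M : Matrix (Fin N) (Fin N) ℂ) :
    cliffOp p M (0 : Matrix (Fin N) (Fin N) ℂ) = 0 := by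
  unfold cliffOp
  rw [Matrix.mulVecLin_zero, TensorProduct.map_zero_right, TensorProduct.map_zero_right]

lemma cliffOp_zero_mid {A : Type*} [Ring A] [Algebra ℂ A] {N : ℕ}
    (p : A →ₗ[ℂ] A) (M' : Matrix (Fin N) (Fin N) ℂ) :
    cliffOp p (0 : Matrix (Fin N) (Fin N) ℂ) M' = 0 := by
  unfold cliffOp
  rw [Matrix.mulVecLin_zero, TensorProduct.map_zero_left, TensorProduct.map_zero_right]

end Helpers

section Elem

variable {A : Type*} [Ring A] [Algebra ℂ A] {k N : ℕ}
  (par : Fin (2 * k) → (A →ₗ[ℂ] A))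
  (γ : Fin (2 * k) → Matrix (Fin N) (Fin N) ℂ)
  (σ : Matrix (Fin N) (Fin N) ℂ)

lemma elemEG (hcomm : ∀ j r, par j ∘ₗ par r = par r ∘ₗ par j)
    (hcl : ∀ j r, γ j * γ r + γ r * γ j =
      if j = r then (-2 : ℂ) • (1 : Matrix (Fin N) (Fin N) ℂ) else 0)
    (ℓ x y : Fin (2 * k)) :
    cliffOp (par ℓ) 1 (γ ℓ) * cliffOp (par x) 1 (γ y) +
      cliffOp (par x) 1 (γ y) * cliffOp (par ℓ) 1 (γ ℓ) =
    if ℓ = y then (-2 : ℂ) • cliffOp (par ℓ ∘ₗ par x) 1 1 else 0 := by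
  rw [cliffOp_mul, cliffOp_mul, hcomm x ℓ, one_mul, ← cliffOp_add_right, hcl ℓ y]
  by_cases h : ℓ = y
  · simp only [if_pos h, cliffOp_smul_right]
  · simp only [if_neg h, cliffOp_zero_right]

lemma elemFH (hcomm : ∀ j r, par j ∘ₗ par r = par r ∘ₗ par j)
    (hcl : ∀ j r, γ j * γ r + γ r * γ j =
      if j = r then (-2 : ℂ) • (1 : Matrix (Fin N) (Fin N) ℂ) else 0)
    (hσ : σ * σ = 1) (ℓ x y : Fin (2 * k)) :
    cliffOp (par ℓ) (γ ℓ) σ * cliffOp (par x) (γ y) σ +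
      cliffOp (par x) (γ y) σ * cliffOp (par ℓ) (γ ℓ) σ =
    if ℓ = y then (-2 : ℂ) • cliffOp (par ℓ ∘ₗ par x) 1 1 else 0 := by
  rw [cliffOp_mul, cliffOp_mul, hcomm x ℓ, hσ, ← cliffOp_add_mid, hcl ℓ y]
  by_cases h : ℓ = y
  · simp only [if_pos h, cliffOp_smul_mid]
  · simp only [if_neg h, cliffOp_zero_mid]

lemma elemEH (hcomm : ∀ j r, par j ∘ₗ par r = par r ∘ₗ par j)
    (hσγ : ∀ j, σ * γ j + γ j * σ = 0) (ℓ x y : Fin (2 * k)) :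
    cliffOp (par ℓ) 1 (γ ℓ) * cliffOp (par x) (γ y) σ +
      cliffOp (par x) (γ y) σ * cliffOp (par ℓ) 1 (γ ℓ) = 0 := by
  rw [cliffOp_mul, cliffOp_mul, hcomm x ℓ, one_mul, mul_one, ← cliffOp_add_right]
  have h : γ ℓ * σ + σ * γ ℓ = 0 := by rw [add_comm]; exact hσγ ℓ
  rw [h, cliffOp_zero_right]

lemma elemFG (hcomm : ∀ j r, par j ∘ₗ par r = par r ∘ₗ par j)
    (hσγ : ∀ j, σ * γ j + γ j * σ = 0) (ℓ x y : Fin (2 * k)) :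
    cliffOp (par ℓ) (γ ℓ) σ * cliffOp (par x) 1 (γ y) +
      cliffOp (par x) 1 (γ y) * cliffOp (par ℓ) (γ ℓ) σ = 0 := by
  rw [cliffOp_mul, cliffOp_mul, hcomm x ℓ, one_mul, mul_one, ← cliffOp_add_right, hσγ y,
    cliffOp_zero_right]

end Elem

section Master

variable {A : Type*} [Ring A] [Algebra ℂ A] {k N : ℕ}

lemma master (par : Fin (2 * k) → (A →ₗ[ℂ] A))
    (hcomm : ∀ j r, par j ∘ₗ par r = par r ∘ₗ par j)
    (γ : Fin (2 * k) → Matrix (Fin N) (Fin N) ℂ)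
    (hcl : ∀ j r, γ j * γ r + γ r * γ j =
      if j = r then (-2 : ℂ) • (1 : Matrix (Fin N) (Fin N) ℂ) else 0)
    (σ : Matrix (Fin N) (Fin N) ℂ) (hσ : σ * σ = 1)
    (hσγ : ∀ j, σ * γ j + γ j * σ = 0)
    (a b : Fin k → Fin (2 * k)) (c e : ℂ) :
    (∑ ℓ, (cliffOp (par ℓ) 1 (γ ℓ) + c • cliffOp (par ℓ) (γ ℓ) σ)) *
      (∑ p : Fin k, (cliffOp (par (a p)) 1 (γ (b p)) - cliffOp (par (b p)) 1 (γ (a p)) +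
        e • (cliffOp (par (a p)) (γ (b p)) σ - cliffOp (par (b p)) (γ (a p)) σ))) +
    (∑ p : Fin k, (cliffOp (par (a p)) 1 (γ (b p)) - cliffOp (par (b p)) 1 (γ (a p)) +
        e • (cliffOp (par (a p)) (γ (b p)) σ - cliffOp (par (b p)) (γ (a p)) σ))) *
      (∑ ℓ, (cliffOp (par ℓ) 1 (γ ℓ) + c • cliffOp (par ℓ) (γ ℓ) σ)) = 0 := by
  rw [Finset.sum_mul_sum, Finset.sum_mul_sum, Finset.sum_comm, ← Finset.sum_add_distrib]
  apply Finset.sum_eq_zero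
  intro p _
  rw [← Finset.sum_add_distrib]
  have expand : ∀ ℓ : Fin (2 * k),
      (cliffOp (par ℓ) 1 (γ ℓ) + c • cliffOp (par ℓ) (γ ℓ) σ) *
        (cliffOp (par (a p)) 1 (γ (b p)) - cliffOp (par (b p)) 1 (γ (a p)) +
          e • (cliffOp (par (a p)) (γ (b p)) σ - cliffOp (par (b p)) (γ (a p)) σ)) +
      (cliffOp (par (a p)) 1 (γ (b p)) - cliffOp (par (b p)) 1 (γ (a p)) +
          e • (cliffOp (par (a p)) (γ (b p)) σ - cliffOp (par (b p)) (γ (a p)) σ)) *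
        (cliffOp (par ℓ) 1 (γ ℓ) + c • cliffOp (par ℓ) (γ ℓ) σ) =
      (cliffOp (par ℓ) 1 (γ ℓ) * cliffOp (par (a p)) 1 (γ (b p)) +
        cliffOp (par (a p)) 1 (γ (b p)) * cliffOp (par ℓ) 1 (γ ℓ)) -
      (cliffOp (par ℓ) 1 (γ ℓ) * cliffOp (par (b p)) 1 (γ (a p)) +
        cliffOp (par (b p)) 1 (γ (a p)) * cliffOp (par ℓ) 1 (γ ℓ)) +
      e • (cliffOp (par ℓ) 1 (γ ℓ) * cliffOp (par (a p)) (γ (b p)) σ +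
        cliffOp (par (a p)) (γ (b p)) σ * cliffOp (par ℓ) 1 (γ ℓ)) -
      e • (cliffOp (par ℓ) 1 (γ ℓ) * cliffOp (par (b p)) (γ (a p)) σ +
        cliffOp (par (b p)) (γ (a p)) σ * cliffOp (par ℓ) 1 (γ ℓ)) +
      c • (cliffOp (par ℓ) (γ ℓ) σ * cliffOp (par (a p)) 1 (γ (b p)) +
        cliffOp (par (a p)) 1 (γ (b p)) * cliffOp (par ℓ) (γ ℓ) σ) -
      c • (cliffOp (par ℓ) (γ ℓ) σ * cliffOp (par (b p)) 1 (γ (a p)) +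
        cliffOp (par (b p)) 1 (γ (a p)) * cliffOp (par ℓ) (γ ℓ) σ) +
      (c * e) • (cliffOp (par ℓ) (γ ℓ) σ * cliffOp (par (a p)) (γ (b p)) σ +
        cliffOp (par (a p)) (γ (b p)) σ * cliffOp (par ℓ) (γ ℓ) σ) -
      (c * e) • (cliffOp (par ℓ) (γ ℓ) σ * cliffOp (par (b p)) (γ (a p)) σ +
        cliffOp (par (b p)) (γ (a p)) σ * cliffOp (par ℓ) (γ ℓ) σ) := by
    intro ℓ
    simp only [mul_add, add_mul, mul_sub, sub_mul, smul_mul_assoc, mul_smul_comm, smul_smul,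
      smul_sub, smul_add]
    module
  calc (∑ ℓ, ((cliffOp (par ℓ) 1 (γ ℓ) + c • cliffOp (par ℓ) (γ ℓ) σ) *
        (cliffOp (par (a p)) 1 (γ (b p)) - cliffOp (par (b p)) 1 (γ (a p)) +
          e • (cliffOp (par (a p)) (γ (b p)) σ - cliffOp (par (b p)) (γ (a p)) σ)) +
      (cliffOp (par (a p)) 1 (γ (b p)) - cliffOp (par (b p)) 1 (γ (a p)) +
          e • (cliffOp (par (a p)) (γ (b p)) σ - cliffOp (par (b p)) (γ (a p)) σ)) *
        (cliffOp (par ℓ) 1 (γ ℓ) + c • cliffOp (par ℓ) (γ ℓ) σ)))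
      = ∑ ℓ, ((if ℓ = b p then (-2 : ℂ) • cliffOp (par ℓ ∘ₗ par (a p)) 1 1 else 0) -
          (if ℓ = a p then (-2 : ℂ) • cliffOp (par ℓ ∘ₗ par (b p)) 1 1 else 0) +
          (c * e) • (if ℓ = b p then (-2 : ℂ) • cliffOp (par ℓ ∘ₗ par (a p)) 1 1 else 0) -
          (c * e) • (if ℓ = a p then (-2 : ℂ) • cliffOp (par ℓ ∘ₗ par (b p)) 1 1 else 0)) := by
        refine Finset.sum_congr rfl fun ℓ _ => ?_
        rw [expand ℓ, elemEG par γ hcomm hcl ℓ (a p) (b p), elemEG par γ hcomm hcl ℓ (b p) (a p),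
          elemEH par γ σ hcomm hσγ ℓ (a p) (b p), elemEH par γ σ hcomm hσγ ℓ (b p) (a p),
          elemFG par γ σ hcomm hσγ ℓ (a p) (b p), elemFG par γ σ hcomm hσγ ℓ (b p) (a p),
          elemFH par γ σ hcomm hcl hσ ℓ (a p) (b p), elemFH par γ σ hcomm hcl hσ ℓ (b p) (a p)]
        simp only [smul_zero, add_zero, sub_zero]
    _ = 0 := by
        simp only [Finset.sum_add_distrib, Finset.sum_sub_distrib, ← Finset.smul_sum,
          Fintype.sum_ite_eq']
        rw [hcomm (a p) (b p)]
        abel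

end Master

/-- Kähler anticommutation in Theorem 3.12: with pairwise commuting derivations,
the formal adjoint `d†`, the second differential `d₂` and its formal adjoint
`d₂†` satisfy `{d†, d₂} = 0` and `{d, d₂†} = 0`. -/
theorem kaehler_anticommutation {A : Type*} [Ring A] [Algebra ℂ A] {k N : ℕ}
    (par : Fin (2 * k) → (A →ₗ[ℂ] A))
    (hder : ∀ j (a b : A), par j (a * b) = par j a * b + a * par j b)
    (hcomm : ∀ j r, par j ∘ₗ par r = par r ∘ₗ par j)
    (γ : Fin (2 * k) → Matrix (Fin N) (Fin N) ℂ)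
    (hcl : ∀ j r, γ j * γ r + γ r * γ j =
      if j = r then (-2 : ℂ) • (1 : Matrix (Fin N) (Fin N) ℂ) else 0)
    (σ : Matrix (Fin N) (Fin N) ℂ) (hσ : σ * σ = 1)
    (hσγ : ∀ j, σ * γ j + γ j * σ = 0)
    (ε' : ℂ) (hε : ε' = 1 ∨ ε' = -1)
    (D Dbar d ddag d₂ d₂dag : A ⊗[ℂ] ((Fin N → ℂ) ⊗[ℂ] (Fin N → ℂ)) →ₗ[ℂ]
      A ⊗[ℂ] ((Fin N → ℂ) ⊗[ℂ] (Fin N → ℂ)))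
    (hD : D = ∑ j, cliffOp (par j) 1 (γ j))
    (hDbar : Dbar = (-ε') • ∑ j, cliffOp (par j) (γ j) σ)
    (hd : d = (1 / 2 : ℂ) • (D - Complex.I • Dbar))
    (hddag : ddag = (1 / 2 : ℂ) • ∑ ℓ,
      (cliffOp (par ℓ) 1 (γ ℓ) - (Complex.I * ε') • cliffOp (par ℓ) (γ ℓ) σ))
    (hd₂ : d₂ = (1 / 2 : ℂ) • ∑ p : Fin k,
      (cliffOp (par ⟨2 * p.1, by have := p.isLt; omega⟩) 1
          (γ ⟨2 * p.1 + 1, by have := p.isLt; omega⟩) -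
        cliffOp (par ⟨2 * p.1 + 1, by have := p.isLt; omega⟩) 1
          (γ ⟨2 * p.1, by have := p.isLt; omega⟩) +
        (Complex.I * ε') •
          (cliffOp (par ⟨2 * p.1, by have := p.isLt; omega⟩)
              (γ ⟨2 * p.1 + 1, by have := p.isLt; omega⟩) σ -
            cliffOp (par ⟨2 * p.1 + 1, by have := p.isLt; omega⟩)
              (γ ⟨2 * p.1, by have := p.isLt; omega⟩) σ)))
    (hd₂dag : d₂dag = (1 / 2 : ℂ) • ∑ p : Fin k,
      (cliffOp (par ⟨2 * p.1, by have := p.isLt; omega⟩) 1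
          (γ ⟨2 * p.1 + 1, by have := p.isLt; omega⟩) -
        cliffOp (par ⟨2 * p.1 + 1, by have := p.isLt; omega⟩) 1
          (γ ⟨2 * p.1, by have := p.isLt; omega⟩) -
        (Complex.I * ε') •
          (cliffOp (par ⟨2 * p.1, by have := p.isLt; omega⟩)
              (γ ⟨2 * p.1 + 1, by have := p.isLt; omega⟩) σ -
            cliffOp (par ⟨2 * p.1 + 1, by have := p.isLt; omega⟩)
              (γ ⟨2 * p.1, by have := p.isLt; omega⟩) σ))) :
    ddag ∘ₗ d₂ + d₂ ∘ₗ ddag = 0 ∧ d ∘ₗ d₂dag + d₂dag ∘ₗ d = 0 := by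
  set a : Fin k → Fin (2 * k) := fun p => ⟨2 * p.1, by have := p.isLt; omega⟩ with ha
  set b : Fin k → Fin (2 * k) := fun p => ⟨2 * p.1 + 1, by have := p.isLt; omega⟩ with hb
  -- rewritten forms
  have hddag' : ddag = (1 / 2 : ℂ) • ∑ ℓ,
      (cliffOp (par ℓ) 1 (γ ℓ) + (-(Complex.I * ε')) • cliffOp (par ℓ) (γ ℓ) σ) := by
    rw [hddag]
    congr 1
    refine Finset.sum_congr rfl fun ℓ _ => ?_
    module
  have hd' : d = (1 / 2 : ℂ) • ∑ ℓ,
      (cliffOp (par ℓ) 1 (γ ℓ) + (Complex.I * ε') • cliffOp (par ℓ) (γ ℓ) σ) := by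
    rw [hd, hD, hDbar]
    congr 1
    rw [Finset.sum_add_distrib, ← Finset.smul_sum, smul_smul, mul_neg, neg_smul,
      sub_neg_eq_add]
  have hd₂dag' : d₂dag = (1 / 2 : ℂ) • ∑ p : Fin k,
      (cliffOp (par (a p)) 1 (γ (b p)) - cliffOp (par (b p)) 1 (γ (a p)) +
        (-(Complex.I * ε')) •
          (cliffOp (par (a p)) (γ (b p)) σ - cliffOp (par (b p)) (γ (a p)) σ)) := by
    rw [hd₂dag]
    congr 1
    refine Finset.sum_congr rfl fun p _ => ?_
    module
  have hd₂' : d₂ = (1 / 2 : ℂ) • ∑ p : Fin k,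
      (cliffOp (par (a p)) 1 (γ (b p)) - cliffOp (par (b p)) 1 (γ (a p)) +
        (Complex.I * ε') •
          (cliffOp (par (a p)) (γ (b p)) σ - cliffOp (par (b p)) (γ (a p)) σ)) := hd₂
  constructor
  · have h := master par hcomm γ hcl σ hσ hσγ a b (-(Complex.I * ε')) (Complex.I * ε')
    rw [hddag', hd₂', ← Module.End.mul_eq_comp, ← Module.End.mul_eq_comp,
      smul_mul_smul_comm, smul_mul_smul_comm, ← smul_add, h, smul_zero]
  · have h := master par hcomm γ hcl σ hσ hσγ a b (Complex.I * ε') (-(Complex.I * ε'))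
    rw [hd', hd₂dag', ← Module.End.mul_eq_comp, ← Module.End.mul_eq_comp,
      smul_mul_smul_comm, smul_mul_smul_comm, ← smul_add, h, smul_zero]
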